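/- arXiv:1105.5954 — 3 statements merged into one kernel-verified Lean document; each statement's English description precedes it below -/
import Mathlib

section
/- There exists a constant C > 0, depending only on N, U, u_0 and the maps u ↦ A_u, u ↦ b_u (in particular independent of ρ and of the penalty term Π), such that for every ρ > 0, every penalty term Π, and every solution x_ρ of the penalised HJB equation, one has ‖x_ρ‖∞ ≤ C. -/
/-! The equation gives `A_{u₀} x - b_{u₀} = ρ · max_u Π(b_u - A_u x) ≥ 0`. Moreover in every row `i`
some `u ∈ U` has `(A_u x)_i ≤ (b_u)_i`: otherwise every penalty in row `i` vanishes, and then so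
does row `i` of `A_{u₀} x - b_{u₀}`. For a Z-matrix `A` and an index `i` where `x` is maximal,
`(A x)_i ≥ (a_ii - Σ_{s≠i} |a_is|) x_i`; by compactness these row gaps are `≥ δ > 0` and
`‖b_u‖ ≤ B` on `U`, so `max x ≤ B / δ`. The same argument for `-x` with `A_{u₀}` alone gives
`min x ≥ -B / δ`. -/

open Matrix Filter

/-- The set `K^o_N`: Z-matrices (non-positive off-diagonal entries) which are
strictly diagonally dominant. -/
def KoMat {N : ℕ} (A : Matrix (Fin N) (Fin N) ℝ) : Prop :=
  (∀ r s, r ≠ s → A r s ≤ 0) ∧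
  ∀ r, ∑ s ∈ Finset.univ.erase r, |A r s| < A r r

/-- A penalty term `Π(y) = (π₁(y₁),…,π_N(y_N))`: each `π i` is continuous,
non-decreasing, identically zero on `(-∞,0]` and strictly positive on `(0,∞)`. -/
structure PenaltyTerm (N : ℕ) where
  π : Fin N → ℝ → ℝ
  cont : ∀ i, Continuous (π i)
  mono : ∀ i, Monotone (π i)
  eq_zero : ∀ i y, y ≤ 0 → π i y = 0
  pos : ∀ i y, 0 < y → 0 < π i y

/-- The penalised HJB equation. -/
def PenHJBEq {N : ℕ} (𝔄 : ℝ → Matrix (Fin N) (Fin N) ℝ) (𝔅 : ℝ → (Fin N → ℝ))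
    (U : Set ℝ) (P : PenaltyTerm N) (u₀ ρ : ℝ) (x : Fin N → ℝ) : Prop :=
  ∀ i : Fin N,
    (𝔄 u₀ *ᵥ x - 𝔅 u₀) i -
      ρ * sSup ((fun u => P.π i ((𝔅 u - 𝔄 u *ᵥ x) i)) '' U) = 0

open Topology

section RowGap

variable {n : Type*} [Fintype n] [DecidableEq n]

def rowGap (A : Matrix n n ℝ) (i : n) : ℝ := A i i - ∑ s ∈ Finset.univ.erase i, |A i s|

lemma rowGap_mul_le_mulVec_of_forall_le {A : Matrix n n ℝ} (hA : ∀ r s, r ≠ s → A r s ≤ 0)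
    {x : n → ℝ} {i : n} (hmax : ∀ j, x j ≤ x i) : rowGap A i * x i ≤ (A *ᵥ x) i := by
  have hoff : ∀ s ∈ Finset.univ.erase i, A i s ≤ 0 := fun s hs =>
    hA i s (Finset.ne_of_mem_erase hs).symm
  calc rowGap A i * x i
      = A i i * x i + ∑ s ∈ Finset.univ.erase i, A i s * x i := by
        rw [rowGap, sub_mul, Finset.sum_mul, sub_eq_add_neg, ← Finset.sum_neg_distrib]
        congr 1
        refine Finset.sum_congr rfl fun s hs => ?_
        rw [abs_of_nonpos (hoff s hs), neg_mul, neg_neg]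
    _ ≤ A i i * x i + ∑ s ∈ Finset.univ.erase i, A i s * x s :=
        add_le_add_right (Finset.sum_le_sum fun s hs =>
          mul_le_mul_of_nonpos_left (hmax s) (hoff s hs)) _
    _ = (A *ᵥ x) i := by
        rw [mulVec, dotProduct, ← Finset.add_sum_erase _ _ (Finset.mem_univ i)]

lemma le_div_of_forall_exists_mulVec_le {δ B : ℝ} (hδ : 0 < δ) (hB : 0 ≤ B) {x : n → ℝ}
    (hx : ∀ i, ∃ A : Matrix n n ℝ,
      (∀ r s, r ≠ s → A r s ≤ 0) ∧ δ ≤ rowGap A i ∧ (A *ᵥ x) i ≤ B) (j : n) :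
    x j ≤ B / δ := by
  obtain ⟨i, -, hmax⟩ := Finset.exists_max_image Finset.univ x ⟨j, Finset.mem_univ j⟩
  obtain ⟨A, hA, hgap, hAx⟩ := hx i
  have hgap_mul : rowGap A i * x i ≤ B :=
    (rowGap_mul_le_mulVec_of_forall_le hA fun k => hmax k (Finset.mem_univ k)).trans hAx
  refine (hmax j (Finset.mem_univ j)).trans ?_
  rw [le_div_iff₀ hδ]
  rcases le_or_gt 0 (x i) with hxi | hxi
  · calc x i * δ ≤ x i * rowGap A i := mul_le_mul_of_nonneg_left hgap hxi
      _ ≤ B := by rwa [mul_comm]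
  · exact (mul_neg_of_neg_of_pos hxi hδ).le.trans hB

lemma continuous_rowGap (i : n) : Continuous fun A : Matrix n n ℝ => rowGap A i := by
  unfold rowGap
  fun_prop

lemma IsCompact.exists_pos_le_rowGap {K : Set (Matrix n n ℝ)} (hK : IsCompact K)
    (hpos : ∀ A ∈ K, ∀ i, 0 < rowGap A i) : ∃ δ > 0, ∀ A ∈ K, ∀ i, δ ≤ rowGap A i := by
  have hrow : ∀ i, ∀ᶠ δ in 𝓝[>] 0, ∀ A ∈ K, δ ≤ rowGap A i := fun i => by
    obtain ⟨δ, hδ, hle⟩ := hK.exists_forall_le' (continuous_rowGap i).continuousOn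
      fun A hA => hpos A hA i
    filter_upwards [eventually_nhdsWithin_of_eventually_nhds (eventually_lt_nhds hδ)]
      with δ' hδ' A hA using hδ'.le.trans (hle A hA)
  obtain ⟨δ, hδ, hδ_pos⟩ := ((eventually_all.2 hrow).and self_mem_nhdsWithin).exists
  exact ⟨δ, hδ_pos, fun A hA i => hδ i A hA⟩

end RowGap

lemma KoMat.rowGap_pos {N : ℕ} {A : Matrix (Fin N) (Fin N) ℝ} (hA : KoMat A) (i : Fin N) :
    0 < rowGap A i :=
  sub_pos.2 (hA.2 i)

lemma PenaltyTerm.nonneg {N : ℕ} (P : PenaltyTerm N) (i : Fin N) (y : ℝ) : 0 ≤ P.π i y := by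
  rcases le_or_gt y 0 with hy | hy
  · exact (P.eq_zero i y hy).ge
  · exact (P.pos i y hy).le

namespace PenHJBEq

variable {N : ℕ} {𝔄 : ℝ → Matrix (Fin N) (Fin N) ℝ} {𝔅 : ℝ → (Fin N → ℝ)} {U : Set ℝ}
  {P : PenaltyTerm N} {u₀ ρ : ℝ} {x : Fin N → ℝ}

lemma le_mulVec (hx : PenHJBEq 𝔄 𝔅 U P u₀ ρ x) (hρ : 0 ≤ ρ) (i : Fin N) :
    𝔅 u₀ i ≤ (𝔄 u₀ *ᵥ x) i := by
  have hsup : 0 ≤ sSup ((fun u => P.π i ((𝔅 u - 𝔄 u *ᵥ x) i)) '' U) :=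
    Real.sSup_nonneg (Set.forall_mem_image.2 fun u _ => P.nonneg i _)
  have heq := hx i
  rw [Pi.sub_apply] at heq
  linarith [mul_nonneg hρ hsup]

lemma exists_mulVec_le (hx : PenHJBEq 𝔄 𝔅 U P u₀ ρ x) (hu₀ : u₀ ∈ U) (i : Fin N) :
    ∃ u ∈ U, (𝔄 u *ᵥ x) i ≤ 𝔅 u i := by
  by_contra! hlt
  have hsup : sSup ((fun u => P.π i ((𝔅 u - 𝔄 u *ᵥ x) i)) '' U) = 0 := by
    refine le_antisymm (Real.sSup_nonpos (Set.forall_mem_image.2 fun u hu => ?_))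
      (Real.sSup_nonneg (Set.forall_mem_image.2 fun u _ => P.nonneg i _))
    exact (P.eq_zero i _ (sub_nonpos.2 (hlt u hu).le)).le
  have heq := hx i
  rw [hsup, mul_zero, sub_zero, Pi.sub_apply, sub_eq_zero] at heq
  exact (hlt u₀ hu₀).ne' heq

end PenHJBEq

theorem penalised_HJB_solution_bounded_general
    (N : ℕ) (a b : ℝ)
    (𝔄 : ℝ → Matrix (Fin N) (Fin N) ℝ) (𝔅 : ℝ → (Fin N → ℝ))
    (hAcont : ContinuousOn 𝔄 (Set.Icc a b)) (hbcont : ContinuousOn 𝔅 (Set.Icc a b))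
    (hKo : ∀ u ∈ Set.Icc a b, KoMat (𝔄 u))
    (u₀ : ℝ) (hu₀ : u₀ ∈ Set.Icc a b) :
    ∃ C > (0:ℝ), ∀ ρ > (0:ℝ), ∀ P : PenaltyTerm N, ∀ x : Fin N → ℝ,
      PenHJBEq 𝔄 𝔅 (Set.Icc a b) P u₀ ρ x → ‖x‖ ≤ C := by
  obtain ⟨δ, hδ, hgap⟩ := (isCompact_Icc.image_of_continuousOn hAcont).exists_pos_le_rowGap
    (Set.forall_mem_image.2 fun u hu => (hKo u hu).rowGap_pos)
  obtain ⟨B, hB⟩ := isCompact_Icc.exists_bound_of_continuousOn hbcont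
  have hbB : ∀ u ∈ Set.Icc a b, ∀ i, |𝔅 u i| ≤ B := fun u hu i =>
    (norm_le_pi_norm (𝔅 u) i).trans (hB u hu)
  have hB0 : 0 ≤ B := (norm_nonneg _).trans (hB u₀ hu₀)
  refine ⟨B / δ + 1, by positivity, fun ρ hρ P x hx => ?_⟩
  have hupper : ∀ j, x j ≤ B / δ := le_div_of_forall_exists_mulVec_le hδ hB0 fun i => by
    obtain ⟨u, hu, hle⟩ := hx.exists_mulVec_le hu₀ i
    exact ⟨𝔄 u, (hKo u hu).1, hgap _ ⟨u, hu, rfl⟩ i, hle.trans (le_of_abs_le (hbB u hu i))⟩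
  have hlower : ∀ j, (-x) j ≤ B / δ := le_div_of_forall_exists_mulVec_le hδ hB0 fun i =>
    ⟨𝔄 u₀, (hKo u₀ hu₀).1, hgap _ ⟨u₀, hu₀, rfl⟩ i, by
      rw [mulVec_neg, Pi.neg_apply, neg_le]
      exact (neg_le_of_abs_le (hbB u₀ hu₀ i)).trans (hx.le_mulVec hρ.le i)⟩
  refine (pi_norm_le_iff_of_nonneg (by positivity)).2 fun j => ?_
  rw [Real.norm_eq_abs, abs_le]
  constructor <;> linarith [hupper j, show -x j ≤ B / δ from hlower j]

/-- Solutions of the penalised HJB equation are bounded in the maximum norm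
by a constant independent of `ρ` and of the penalty term `Π`.
(The norm on `Fin N → ℝ` is the sup/maximum norm.) -/
theorem penalised_HJB_solution_bounded
    (N : ℕ) (hN : 0 < N) (a b : ℝ) (hab : a ≤ b)
    (𝔄 : ℝ → Matrix (Fin N) (Fin N) ℝ) (𝔅 : ℝ → (Fin N → ℝ))
    (hAcont : ContinuousOn 𝔄 (Set.Icc a b)) (hbcont : ContinuousOn 𝔅 (Set.Icc a b))
    (hKo : ∀ u ∈ Set.Icc a b, KoMat (𝔄 u))
    (u₀ : ℝ) (hu₀ : u₀ ∈ Set.Icc a b) :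
    ∃ C > (0:ℝ), ∀ ρ > (0:ℝ), ∀ P : PenaltyTerm N, ∀ x : Fin N → ℝ,
      PenHJBEq 𝔄 𝔅 (Set.Icc a b) P u₀ ρ x → ‖x‖ ≤ C :=
  penalised_HJB_solution_bounded_general N a b 𝔄 𝔅 hAcont hbcont hKo u₀ hu₀
end

section
/- Fix u_0 ∈ U, a constant c_min > 0, and a penalty term Π such that each π_i is continuously differentiable on (0,∞) with π_i'(y) ≥ c_min for all y ∈ (0,∞) and all i. Suppose that for every ρ > 0 there is a solution x_ρ of the penalised HJB equation, and let x* be the solution of the discrete HJB equation min_{u∈U}{A_u x* − b_u} = 0. Then there exists a constant C > 0, depending on c_min but not on ρ or Π, such that ‖x* − x_ρ‖∞ ≤ C/ρ for every ρ > 0. -/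
open Matrix Filter

/-!
Every `A_u` is a strictly diagonally dominant Z-matrix, with a dominance margin `δ > 0`
uniform in `u` by compactness of `U`. Hence, at an index `r` where a vector `e ≥ 0` is maximal,
`(A_u e)_r ≥ δ e_r` for every control `u` (a discrete maximum principle). Applied to
`e = x_ρ - x*`, it makes every penalty in row `r` vanish, which contradicts the equation in
row `r` unless `x_ρ ≤ x*`. Applied to `e = x* - x_ρ`, it shows that at the control active
for `x*` in row `r` the penalty argument is at least `δ e_r`, so the penalty is at least
`c_min δ e_r`; the equation in row `r` then gives `ρ c_min δ e_r ≤ ‖A_{u₀} x* - b_{u₀}‖∞`.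
-/

open scoped Topology

section DiagonalDominance

variable {ι : Type*} [Fintype ι]

theorem norm_le_of_forall_isMax {e : ι → ℝ} (he : 0 ≤ e) {C : ℝ} (hC : 0 ≤ C)
    (h : ∀ r, (∀ i, e i ≤ e r) → e r ≤ C) : ‖e‖ ≤ C := by
  refine (pi_norm_le_iff_of_nonneg hC).2 fun i => ?_
  have : Nonempty ι := ⟨i⟩
  obtain ⟨r, hr⟩ := Finite.exists_max e
  rw [Real.norm_of_nonneg (he i)]
  exact (hr i).trans (h r hr)

theorem le_zero_of_forall_isMax {e : ι → ℝ} (h : ∀ r, (∀ i, e i ≤ e r) → e r ≤ 0) : e ≤ 0 := by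
  intro i
  have : Nonempty ι := ⟨i⟩
  obtain ⟨r, hr⟩ := Finite.exists_max e
  exact (hr i).trans (h r hr)

variable [DecidableEq ι]

def diagMargin (A : Matrix ι ι ℝ) (r : ι) : ℝ :=
  A r r - ∑ s ∈ Finset.univ.erase r, |A r s|

theorem continuous_diagMargin (r : ι) : Continuous fun A : Matrix ι ι ℝ => diagMargin A r := by
  unfold diagMargin
  fun_prop

theorem diagMargin_mul_le_mulVec_apply {A : Matrix ι ι ℝ} {r : ι}
    (hoff : ∀ s, s ≠ r → A r s ≤ 0) {e : ι → ℝ} (hmax : ∀ i, e i ≤ e r) (he : 0 ≤ e r) :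
    diagMargin A r * e r ≤ (A *ᵥ e) r := by
  have hrowsum : diagMargin A r ≤ ∑ s, A r s := by
    rw [diagMargin, ← Finset.add_sum_erase _ _ (Finset.mem_univ r), sub_eq_add_neg,
      ← Finset.sum_neg_distrib]
    gcongr with s
    exact neg_abs_le _
  calc diagMargin A r * e r ≤ (∑ s, A r s) * e r := mul_le_mul_of_nonneg_right hrowsum he
    _ = ∑ s, A r s * e r := Finset.sum_mul _ _ _
    _ ≤ ∑ s, A r s * e s := Finset.sum_le_sum fun s _ => by
      rcases eq_or_ne s r with rfl | hs
      · rfl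
      · exact mul_le_mul_of_nonpos_left (hmax s) (hoff s hs)

end DiagonalDominance

section KoMat

variable {N : ℕ}

theorem KoMat.diagMargin_pos {A : Matrix (Fin N) (Fin N) ℝ} (hA : KoMat A) (r : Fin N) :
    0 < diagMargin A r :=
  sub_pos.2 (hA.2 r)

theorem KoMat.mulVec_apply_pos {A : Matrix (Fin N) (Fin N) ℝ} (hA : KoMat A) {e : Fin N → ℝ}
    {r : Fin N} (hmax : ∀ i, e i ≤ e r) (he : 0 < e r) : 0 < (A *ᵥ e) r :=
  (mul_pos (hA.diagMargin_pos r) he).trans_le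
    (diagMargin_mul_le_mulVec_apply (fun s hs => hA.1 r s hs.symm) hmax he.le)

theorem exists_pos_le_diagMargin {X : Type*} [TopologicalSpace X] {U : Set X}
    (hU : IsCompact U) {𝔄 : X → Matrix (Fin N) (Fin N) ℝ} (hA : ContinuousOn 𝔄 U)
    (hKo : ∀ u ∈ U, KoMat (𝔄 u)) : ∃ δ > 0, ∀ u ∈ U, ∀ r, δ ≤ diagMargin (𝔄 u) r := by
  have hrow : ∀ r, ∀ᶠ δ in 𝓝[>] (0 : ℝ), ∀ u ∈ U, δ ≤ diagMargin (𝔄 u) r := fun r => by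
    obtain ⟨δ, hδ, hle⟩ := hU.exists_forall_le' ((continuous_diagMargin r).comp_continuousOn hA)
      fun u hu => (hKo u hu).diagMargin_pos r
    filter_upwards [Ioo_mem_nhdsGT hδ] with δ' hδ' u hu using hδ'.2.le.trans (hle u hu)
  obtain ⟨δ, hle, hδ⟩ := ((Filter.eventually_all.2 hrow).and self_mem_nhdsWithin).exists
  exact ⟨δ, hδ, fun u hu r => hle r u hu⟩

end KoMat

theorem PenaltyTerm.mul_le_π {N : ℕ} (P : PenaltyTerm N) {i : Fin N} {dπ : ℝ → ℝ} {c : ℝ}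
    (hder : ∀ y, 0 < y → HasDerivAt (P.π i) (dπ y) y) (hge : ∀ y, 0 < y → c ≤ dπ y)
    {y : ℝ} (hy : 0 ≤ y) : c * y ≤ P.π i y := by
  have hmvt := (convex_Ici (0 : ℝ)).mul_sub_le_image_sub_of_le_deriv (P.cont i).continuousOn
    (fun t ht => (hder t (by simpa using ht)).differentiableAt.differentiableWithinAt)
    (fun t ht => by
      rw [interior_Ici] at ht
      rw [(hder t ht).deriv]
      exact hge t ht)
    0 (Set.mem_Ici.2 le_rfl) y hy hy
  simpa [P.eq_zero i 0 le_rfl] using hmvt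

section PenalisedHJB

variable {N : ℕ} {𝔄 : ℝ → Matrix (Fin N) (Fin N) ℝ} {𝔅 : ℝ → (Fin N → ℝ)} {U : Set ℝ}
  {P : PenaltyTerm N} {u₀ ρ : ℝ} {xstar xρ : Fin N → ℝ}

theorem PenHJBEq.le_of_supersolution (h : PenHJBEq 𝔄 𝔅 U P u₀ ρ xρ)
    (hKo : ∀ u ∈ U, KoMat (𝔄 u)) (hu₀ : u₀ ∈ U)
    (hstar : ∀ i, ∀ u ∈ U, 0 ≤ (𝔄 u *ᵥ xstar - 𝔅 u) i) : xρ ≤ xstar := by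
  refine sub_nonpos.1 (le_zero_of_forall_isMax fun r hr => ?_)
  by_contra! hpos
  have hA : ∀ u ∈ U, 0 < (𝔄 u *ᵥ (xρ - xstar)) r :=
    fun u hu => (hKo u hu).mulVec_apply_pos hr hpos
  have hinactive : ∀ u ∈ U, P.π r ((𝔅 u - 𝔄 u *ᵥ xρ) r) = 0 := fun u hu => by
    refine P.eq_zero r _ ?_
    have hsuper := hstar r u hu
    have hpush := hA u hu
    simp only [Pi.sub_apply, Matrix.mulVec_sub] at hsuper hpush ⊢
    linarith
  have hsup : sSup ((fun u => P.π r ((𝔅 u - 𝔄 u *ᵥ xρ) r)) '' U) = 0 := by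
    rw [Set.EqOn.image_eq (f₂ := fun _ => 0) hinactive, (Set.nonempty_of_mem hu₀).image_const,
      csSup_singleton]
  have hr₀ := h r
  have hsuper := hstar r u₀ hu₀
  have hpush := hA u₀ hu₀
  rw [hsup, mul_zero, sub_zero] at hr₀
  simp only [Pi.sub_apply, Matrix.mulVec_sub] at hr₀ hsuper hpush
  linarith

theorem PenHJBEq.mul_sub_apply_le (h : PenHJBEq 𝔄 𝔅 U P u₀ ρ xρ) (hU : IsCompact U)
    (hA : ContinuousOn 𝔄 U) (hB : ContinuousOn 𝔅 U) (hu₀ : u₀ ∈ U) (hρ : 0 ≤ ρ)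
    (hKo : ∀ u ∈ U, KoMat (𝔄 u)) {δ : ℝ} (hδ : 0 ≤ δ)
    (hδle : ∀ u ∈ U, ∀ r, δ ≤ diagMargin (𝔄 u) r)
    (hstar : ∀ i, IsLeast ((fun u => (𝔄 u *ᵥ xstar - 𝔅 u) i) '' U) 0)
    {c : ℝ} (hπ : ∀ i y, 0 ≤ y → c * y ≤ P.π i y)
    {r : Fin N} (hr : ∀ i, (xstar - xρ) i ≤ (xstar - xρ) r) (hnn : 0 ≤ (xstar - xρ) r) :
    ρ * (c * (δ * (xstar - xρ) r)) ≤ (𝔄 u₀ *ᵥ xstar - 𝔅 u₀) r := by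
  have hrow : ∀ u ∈ U, δ * (xstar - xρ) r ≤ (𝔄 u *ᵥ (xstar - xρ)) r := fun u hu =>
    (mul_le_mul_of_nonneg_right (hδle u hu r) hnn).trans
      (diagMargin_mul_le_mulVec_apply (fun s hs => (hKo u hu).1 r s hs.symm) hr hnn)
  obtain ⟨û, hû, hûactive⟩ := (hstar r).1
  have hbdd : BddAbove ((fun u => P.π r ((𝔅 u - 𝔄 u *ᵥ xρ) r)) '' U) := by
    refine (hU.image_of_continuousOn ?_).bddAbove
    have := P.cont r
    fun_prop
  have hsup : c * (δ * (xstar - xρ) r) ≤ sSup ((fun u => P.π r ((𝔅 u - 𝔄 u *ᵥ xρ) r)) '' U) :=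
    calc c * (δ * (xstar - xρ) r) ≤ P.π r (δ * (xstar - xρ) r) := hπ r _ (mul_nonneg hδ hnn)
      _ ≤ P.π r ((𝔅 û - 𝔄 û *ᵥ xρ) r) := P.mono r (by
        have hpush := hrow û hû
        simp only [Pi.sub_apply, Matrix.mulVec_sub] at hpush hûactive ⊢
        linarith)
      _ ≤ _ := le_csSup hbdd ⟨û, hû, rfl⟩
  have hr₀ := h r
  have hpush := hrow u₀ hu₀
  have hpen := mul_le_mul_of_nonneg_left hsup hρ
  have hδe := mul_nonneg hδ hnn
  simp only [Pi.sub_apply, Matrix.mulVec_sub] at hr₀ hpush hpen hδe ⊢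
  linarith

end PenalisedHJB

theorem penalised_HJB_error_estimate_general
    (N : ℕ) (a b : ℝ)
    (𝔄 : ℝ → Matrix (Fin N) (Fin N) ℝ) (𝔅 : ℝ → (Fin N → ℝ))
    (hAcont : ContinuousOn 𝔄 (Set.Icc a b)) (hbcont : ContinuousOn 𝔅 (Set.Icc a b))
    (hKo : ∀ u ∈ Set.Icc a b, KoMat (𝔄 u))
    (u₀ : ℝ) (hu₀ : u₀ ∈ Set.Icc a b)
    (cmin : ℝ) (hcmin : 0 < cmin)
    (xstar : Fin N → ℝ)
    (hxstar : ∀ i : Fin N,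
      IsLeast ((fun u => (𝔄 u *ᵥ xstar - 𝔅 u) i) '' Set.Icc a b) 0) :
    ∃ C > (0:ℝ),
      ∀ (P : PenaltyTerm N) (dπ : Fin N → ℝ → ℝ),
        (∀ i y, 0 < y → HasDerivAt (P.π i) (dπ i y) y) →
        (∀ i, ContinuousOn (dπ i) (Set.Ioi (0:ℝ))) →
        (∀ i y, 0 < y → cmin ≤ dπ i y) →
        ∀ ρ > (0:ℝ), ∀ xρ : Fin N → ℝ,
          PenHJBEq 𝔄 𝔅 (Set.Icc a b) P u₀ ρ xρ →
          ‖xstar - xρ‖ ≤ C / ρ := by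
  obtain ⟨δ, hδ, hδle⟩ := exists_pos_le_diagMargin isCompact_Icc hAcont hKo
  set M := ‖𝔄 u₀ *ᵥ xstar - 𝔅 u₀‖
  -- `M + 1` rather than `M`: `M` vanishes when `x*` is also optimal for `u₀` in every row.
  refine ⟨(M + 1) / (cmin * δ), by positivity, fun P dπ hder _ hge ρ hρ xρ heq => ?_⟩
  have hle : xρ ≤ xstar :=
    heq.le_of_supersolution hKo hu₀ fun i u hu => (hxstar i).2 ⟨u, hu, rfl⟩
  refine norm_le_of_forall_isMax (sub_nonneg.2 hle) (by positivity) fun r hr => ?_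
  have hbound := heq.mul_sub_apply_le isCompact_Icc hAcont hbcont hu₀ hρ.le hKo hδ.le hδle hxstar
    (fun i y hy => P.mul_le_π (hder i) (hge i) hy) hr (sub_nonneg.2 hle r)
  have hM : (𝔄 u₀ *ᵥ xstar - 𝔅 u₀) r ≤ M := (Real.le_norm_self _).trans (norm_le_pi_norm _ r)
  rw [div_div, le_div_iff₀ (by positivity)]
  linarith [show (xstar - xρ) r * (cmin * δ * ρ) = ρ * (cmin * (δ * (xstar - xρ) r)) by ring]

/-- First-order penalisation error estimate `‖x* - x_ρ‖∞ ≤ C/ρ`, with `C > 0`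
depending on `c_min` but not on `ρ` nor on the penalty term `Π` (assumed to be
continuously differentiable on `(0,∞)` with derivative `≥ c_min` there). -/
theorem penalised_HJB_error_estimate
    (N : ℕ) (hN : 0 < N) (a b : ℝ) (hab : a ≤ b)
    (𝔄 : ℝ → Matrix (Fin N) (Fin N) ℝ) (𝔅 : ℝ → (Fin N → ℝ))
    (hAcont : ContinuousOn 𝔄 (Set.Icc a b)) (hbcont : ContinuousOn 𝔅 (Set.Icc a b))
    (hKo : ∀ u ∈ Set.Icc a b, KoMat (𝔄 u))
    (u₀ : ℝ) (hu₀ : u₀ ∈ Set.Icc a b)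
    (cmin : ℝ) (hcmin : 0 < cmin)
    (xstar : Fin N → ℝ)
    (hxstar : ∀ i : Fin N,
      IsLeast ((fun u => (𝔄 u *ᵥ xstar - 𝔅 u) i) '' Set.Icc a b) 0) :
    ∃ C > (0:ℝ),
      ∀ (P : PenaltyTerm N) (dπ : Fin N → ℝ → ℝ),
        (∀ i y, 0 < y → HasDerivAt (P.π i) (dπ i y) y) →
        (∀ i, ContinuousOn (dπ i) (Set.Ioi (0:ℝ))) →
        (∀ i y, 0 < y → cmin ≤ dπ i y) →
        ∀ ρ > (0:ℝ), ∀ xρ : Fin N → ℝ,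
          PenHJBEq 𝔄 𝔅 (Set.Icc a b) P u₀ ρ xρ →
          ‖xstar - xρ‖ ≤ C / ρ :=
  penalised_HJB_error_estimate_general N a b 𝔄 𝔅 hAcont hbcont hKo u₀ hu₀ cmin hcmin xstar hxstar
end

section
/- For every u_0 ∈ U and every ρ > 0 there exists a unique x_ρ ∈ ℝ^N satisfying the penalised HJB equation with penalty term Π(y) = max{y,0}: (A_{u_0}x_ρ − b_{u_0}) − ρ·max_{u∈U} max{b_u − A_u x_ρ , 0} = 0, where the i-th component of max_{u∈U} max{b_u − A_u x_ρ , 0} is max_{u∈U} max{(b_u − A_u x_ρ)_i , 0}. -/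
open Matrix Filter

/-!
Let `F` be the penalised residual and `C` a bound for the diagonal entries of all `A_u`. For the
step `τ = 1 / ((1 + ρ) C)`, the `i`-th component of `x - τ F(x)` is the supremum over `u ∈ U` of
`max (Jᵤ x) (J x)`, where `Jᵤ` and `J` are Jacobi-type steps for the strictly diagonally dominant
matrices `A_{u₀} + ρ A_u` and `A_{u₀}`. By compactness, the dominance ratios and the diagonal
entries are bounded away from `1` and `0` uniformly in `u`, so all these steps, and hence their
supremum, are Lipschitz for the maximum norm with a common constant `< 1`. Banach's fixed point
theorem then gives exactly one zero of `F`.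
-/

theorem add_mul_csSup_image {ι : Type*} {s : Set ι} {f : ι → ℝ} (hs : s.Nonempty)
    (hf : BddAbove (f '' s)) (t : ℝ) {k : ℝ} (hk : 0 ≤ k) :
    t + k * sSup (f '' s) = sSup ((fun u => t + k * f u) '' s) := by
  have hmono : Monotone fun y => t + k * y := fun _ _ h => by dsimp only; gcongr
  rw [hmono.map_csSup_of_continuousAt (by fun_prop) (hs.image f) hf, Set.image_image]

theorem abs_csSup_image_sub_csSup_image_le {ι : Type*} {s : Set ι} {f g : ι → ℝ}
    (hs : s.Nonempty) (hf : BddAbove (f '' s)) (hg : BddAbove (g '' s)) {K : ℝ}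
    (h : ∀ u ∈ s, |f u - g u| ≤ K) : |sSup (f '' s) - sSup (g '' s)| ≤ K := by
  have key : ∀ {f g : ι → ℝ}, BddAbove (g '' s) → (∀ u ∈ s, |f u - g u| ≤ K) →
      sSup (f '' s) ≤ sSup (g '' s) + K := fun {f g} hg h =>
    csSup_le (hs.image f) <| Set.forall_mem_image.2 fun u hu => by
      have := le_csSup hg (Set.mem_image_of_mem g hu)
      linarith [(abs_le.1 (h u hu)).2]
  rw [abs_sub_le_iff]
  constructor
  · linarith [key hg h]
  · linarith [key hf fun u hu => (abs_sub_comm (g u) (f u)).trans_le (h u hu)]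

theorem existsUnique_eq_zero_of_contractingWith {E : Type*} [NormedAddCommGroup E] [Module ℝ E]
    [CompleteSpace E] {F : E → E} {c : ℝ} (hc : c ≠ 0) {K : NNReal}
    (hF : ContractingWith K fun x => x - c • F x) : ∃! x, F x = 0 := by
  have hfix : ∀ x, Function.IsFixedPt (fun x => x - c • F x) x ↔ F x = 0 := fun x => by
    simp [Function.IsFixedPt, hc]
  exact ⟨_, (hfix _).1 hF.fixedPoint_isFixedPt,
    fun y hy => hF.fixedPoint_unique' ((hfix y).2 hy) hF.fixedPoint_isFixedPt⟩

section Dominance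

variable {n : Type*} [Fintype n] [DecidableEq n]

def offDiagRowSum (M : Matrix n n ℝ) (i : n) : ℝ := ∑ j ∈ Finset.univ.erase i, |M i j|

theorem offDiagRowSum_add_smul_le {M P : Matrix n n ℝ} {i : n} {q ρ : ℝ} (hρ : 0 ≤ ρ)
    (hM : offDiagRowSum M i ≤ q * M i i) (hP : offDiagRowSum P i ≤ q * P i i) :
    offDiagRowSum (M + ρ • P) i ≤ q * (M + ρ • P) i i := by
  have : offDiagRowSum (M + ρ • P) i ≤ offDiagRowSum M i + ρ * offDiagRowSum P i := by
    simp only [offDiagRowSum, Finset.mul_sum, ← Finset.sum_add_distrib]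
    refine Finset.sum_le_sum fun j _ => ?_
    simpa [abs_mul, abs_of_nonneg hρ] using abs_add_le (M i j) (ρ * P i j)
  simp only [Matrix.add_apply, Matrix.smul_apply, smul_eq_mul]
  nlinarith

theorem abs_sub_mul_mulVec_apply_le {M : Matrix n n ℝ} {i : n} {q τ : ℝ}
    (hrow : offDiagRowSum M i ≤ q * M i i) (hτ : 0 ≤ τ) (hτM : τ * M i i ≤ 1) (z : n → ℝ) :
    |z i - τ * (M *ᵥ z) i| ≤ (1 - τ * (1 - q) * M i i) * ‖z‖ := by
  have hz : ∀ j, |z j| ≤ ‖z‖ := fun j => by simpa using norm_le_pi_norm z j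
  have hsplit : z i - τ * (M *ᵥ z) i =
      (1 - τ * M i i) * z i - τ * ∑ j ∈ Finset.univ.erase i, M i j * z j := by
    rw [mulVec, dotProduct, ← Finset.add_sum_erase _ _ (Finset.mem_univ i)]
    ring
  have hoff : |∑ j ∈ Finset.univ.erase i, M i j * z j| ≤ offDiagRowSum M i * ‖z‖ := by
    rw [offDiagRowSum, Finset.sum_mul]
    refine (Finset.abs_sum_le_sum_abs _ _).trans (Finset.sum_le_sum fun j _ => ?_)
    rw [abs_mul]
    exact mul_le_mul_of_nonneg_left (hz j) (abs_nonneg _)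
  calc |z i - τ * (M *ᵥ z) i|
      ≤ (1 - τ * M i i) * |z i| + τ * |∑ j ∈ Finset.univ.erase i, M i j * z j| := by
        rw [hsplit]
        refine (abs_sub _ _).trans ?_
        rw [abs_mul, abs_mul, abs_of_nonneg (sub_nonneg.2 hτM), abs_of_nonneg hτ]
    _ ≤ (1 - τ * M i i) * ‖z‖ + τ * (q * M i i * ‖z‖) := by
        gcongr
        · exact hz i
        · exact hoff.trans (mul_le_mul_of_nonneg_right hrow (norm_nonneg z))
    _ = (1 - τ * (1 - q) * M i i) * ‖z‖ := by ring

theorem IsCompact.exists_uniform_diagDominance {X : Type*} [TopologicalSpace X] {s : Set X}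
    (hs : IsCompact s) {A : X → Matrix n n ℝ} (hA : ContinuousOn A s)
    (hdom : ∀ u ∈ s, ∀ i, offDiagRowSum (A u) i < A u i i) :
    ∃ q δ C : ℝ, q < 1 ∧ 0 < δ ∧ 0 < C ∧ ∀ u ∈ s, ∀ i,
      offDiagRowSum (A u) i ≤ q * A u i i ∧ δ ≤ A u i i ∧ A u i i ≤ C := by
  let : TopologicalSpace n := ⊥
  have : DiscreteTopology n := ⟨rfl⟩
  set t : Set (X × n) := s ×ˢ Set.univ
  have ht : IsCompact t := hs.prod isCompact_univ
  have hcont : ∀ g : Matrix n n ℝ → n → ℝ, (∀ i, Continuous fun M => g M i) →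
      ContinuousOn (fun p : X × n => g (A p.1) p.2) t := fun g hg =>
    continuousOn_prod_of_discrete_right.2 fun i =>
      ((hg i).comp_continuousOn hA).mono fun _ hu => hu.1
  have hdiag := hcont (fun M i => M i i) fun i => by fun_prop
  have hrow := hcont offDiagRowSum fun i => by unfold offDiagRowSum; fun_prop
  have hpos : ∀ p ∈ t, 0 < A p.1 p.2 p.2 := fun p hp =>
    (Finset.sum_nonneg fun _ _ => abs_nonneg _).trans_lt (hdom p.1 hp.1 p.2)
  obtain ⟨ε, hε, hratio⟩ := ht.exists_forall_le'
    (continuousOn_const.sub (hrow.div hdiag fun p hp => (hpos p hp).ne')) fun p hp =>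
      sub_pos.2 ((div_lt_one (hpos p hp)).2 (hdom p.1 hp.1 p.2))
  obtain ⟨δ, hδ, hδle⟩ := ht.exists_forall_le' hdiag hpos
  obtain ⟨C, hC⟩ := ht.bddAbove_image hdiag
  refine ⟨1 - ε, δ, max C 1, by linarith, hδ, by positivity, fun u hu i =>
    ⟨?_, hδle (u, i) ⟨hu, trivial⟩, le_max_of_le_left (hC ⟨(u, i), ⟨hu, trivial⟩, rfl⟩)⟩⟩
  have : ε ≤ 1 - offDiagRowSum (A u) i / A u i i := hratio (u, i) ⟨hu, trivial⟩
  rwa [le_sub_comm, div_le_iff₀ (hpos (u, i) ⟨hu, trivial⟩)] at this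

end Dominance

section Penalised

variable {X n : Type*} [Fintype n]

noncomputable def penalisedResidual (A : X → Matrix n n ℝ) (B : X → n → ℝ) (s : Set X) (u₀ : X)
    (ρ : ℝ) (x : n → ℝ) : n → ℝ := fun i =>
  (A u₀ *ᵥ x - B u₀) i - ρ * sSup ((fun u => max ((B u - A u *ᵥ x) i) 0) '' s)

noncomputable def penalisedJacobiTerm (A : X → Matrix n n ℝ) (B : X → n → ℝ) (u₀ : X)
    (ρ τ : ℝ) (x : n → ℝ) (i : n) (u : X) : ℝ :=
  x i - τ * (A u₀ *ᵥ x - B u₀) i + τ * ρ * max ((B u - A u *ᵥ x) i) 0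

variable {A : X → Matrix n n ℝ} {B : X → n → ℝ} {s : Set X} {u₀ : X} {ρ τ : ℝ}

theorem sub_smul_penalisedResidual_apply (hs : s.Nonempty) {x : n → ℝ} {i : n}
    (hbdd : BddAbove ((fun u => max ((B u - A u *ᵥ x) i) 0) '' s)) (hτρ : 0 ≤ τ * ρ) :
    (x - τ • penalisedResidual A B s u₀ ρ x) i = sSup (penalisedJacobiTerm A B u₀ ρ τ x i '' s) := by
  unfold penalisedJacobiTerm
  rw [← add_mul_csSup_image hs hbdd _ hτρ]
  simp only [Pi.sub_apply, Pi.smul_apply, smul_eq_mul, penalisedResidual]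
  ring

theorem abs_penalisedJacobiTerm_sub_le [DecidableEq n] (hu₀ : u₀ ∈ s) (hρ : 0 ≤ ρ)
    {q δ C : ℝ} (hq : q ≤ 1) (hτ : 0 ≤ τ) (hτC : τ * ((1 + ρ) * C) ≤ 1)
    (hbounds : ∀ u ∈ s, ∀ i,
      offDiagRowSum (A u) i ≤ q * A u i i ∧ δ ≤ A u i i ∧ A u i i ≤ C)
    (hδ : 0 ≤ δ) {u : X} (hu : u ∈ s) (x y : n → ℝ) (i : n) :
    |penalisedJacobiTerm A B u₀ ρ τ x i u - penalisedJacobiTerm A B u₀ ρ τ y i u| ≤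
      (1 - τ * (1 - q) * δ) * ‖x - y‖ := by
  obtain ⟨hrow₀, hδ₀, hC₀⟩ := hbounds u₀ hu₀ i
  obtain ⟨hrow, hδu, hCu⟩ := hbounds u hu i
  have hstep : ∀ M : Matrix n n ℝ, offDiagRowSum M i ≤ q * M i i → δ ≤ M i i →
      M i i ≤ (1 + ρ) * C →
      |(x - y) i - τ * (M *ᵥ (x - y)) i| ≤ (1 - τ * (1 - q) * δ) * ‖x - y‖ := by
    intro M hMrow hδM hCM
    refine (abs_sub_mul_mulVec_apply_le hMrow hτ ?_ (x - y)).trans ?_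
    · nlinarith
    · gcongr
  have hk : 0 ≤ τ * ρ := mul_nonneg hτ hρ
  -- `t + k * max p 0 = max (t + k * p) t`, a Jacobi step for `A u₀ + ρ • A u` and one for `A u₀`
  simp only [penalisedJacobiTerm, mul_max_of_nonneg _ _ hk, mul_zero, ← max_add_add_left,
    add_zero]
  refine (abs_max_sub_max_le_max _ _ _ _).trans (max_le ?_ ?_)
  · have hdiag : (A u₀ + ρ • A u) i i = A u₀ i i + ρ * A u i i := rfl
    refine (congrArg abs ?_).trans_le (hstep (A u₀ + ρ • A u)
      (offDiagRowSum_add_smul_le hρ hrow₀ hrow) (by nlinarith) (by nlinarith))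
    simp only [Pi.sub_apply, mulVec_sub, add_mulVec, smul_mulVec, Pi.add_apply, Pi.smul_apply,
      smul_eq_mul]
    ring
  · refine (congrArg abs ?_).trans_le (hstep (A u₀) hrow₀ hδ₀ (by nlinarith))
    simp only [Pi.sub_apply, mulVec_sub]
    ring

theorem lipschitzWith_sub_smul_penalisedResidual [TopologicalSpace X] [DecidableEq n]
    (hs : IsCompact s) (hA : ContinuousOn A s) (hB : ContinuousOn B s) (hu₀ : u₀ ∈ s)
    (hρ : 0 ≤ ρ) {q δ C : ℝ} (hq : q ≤ 1) (hτ : 0 ≤ τ) (hτC : τ * ((1 + ρ) * C) ≤ 1)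
    (hbounds : ∀ u ∈ s, ∀ i,
      offDiagRowSum (A u) i ≤ q * A u i i ∧ δ ≤ A u i i ∧ A u i i ≤ C) (hδ : 0 ≤ δ) :
    LipschitzWith (1 - τ * (1 - q) * δ).toNNReal
      fun x => x - τ • penalisedResidual A B s u₀ ρ x := by
  have hbdd : ∀ x i, BddAbove ((fun u => max ((B u - A u *ᵥ x) i) 0) '' s) := fun x i =>
    hs.bddAbove_image (by fun_prop)
  have hbddJ : ∀ x i, BddAbove (penalisedJacobiTerm A B u₀ ρ τ x i '' s) := fun x i =>
    hs.bddAbove_image (by unfold penalisedJacobiTerm; fun_prop)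
  refine LipschitzWith.of_dist_le_mul fun x y => (dist_pi_le_iff (by positivity)).2 fun i => ?_
  rw [Real.dist_eq, dist_eq_norm,
    sub_smul_penalisedResidual_apply ⟨u₀, hu₀⟩ (hbdd x i) (mul_nonneg hτ hρ),
    sub_smul_penalisedResidual_apply ⟨u₀, hu₀⟩ (hbdd y i) (mul_nonneg hτ hρ)]
  refine (abs_csSup_image_sub_csSup_image_le ⟨u₀, hu₀⟩ (hbddJ x i) (hbddJ y i) fun u hu =>
    abs_penalisedJacobiTerm_sub_le hu₀ hρ hq hτ hτC hbounds hδ hu x y i).trans ?_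
  exact mul_le_mul_of_nonneg_right (Real.le_coe_toNNReal _) (norm_nonneg _)

end Penalised

theorem penalised_HJB_max_penalty_exists_unique_general
    (N : ℕ) (a b : ℝ)
    (𝔄 : ℝ → Matrix (Fin N) (Fin N) ℝ) (𝔅 : ℝ → (Fin N → ℝ))
    (hAcont : ContinuousOn 𝔄 (Set.Icc a b)) (hbcont : ContinuousOn 𝔅 (Set.Icc a b))
    (hKo : ∀ u ∈ Set.Icc a b, KoMat (𝔄 u))
    (u₀ : ℝ) (hu₀ : u₀ ∈ Set.Icc a b) (ρ : ℝ) (hρ : 0 < ρ) :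
    ∃! x : Fin N → ℝ,
      ∀ i : Fin N,
        (𝔄 u₀ *ᵥ x - 𝔅 u₀) i -
          ρ * sSup ((fun u => max ((𝔅 u - 𝔄 u *ᵥ x) i) 0) '' Set.Icc a b) = 0 := by
  obtain ⟨q, δ, C, hq, hδ, hC, hbounds⟩ :=
    isCompact_Icc.exists_uniform_diagDominance hAcont fun u hu => (hKo u hu).2
  set τ := ((1 + ρ) * C)⁻¹
  have hτ : 0 < τ := by positivity
  have hτC : τ * ((1 + ρ) * C) = 1 := inv_mul_cancel₀ (by positivity)
  have hκ : (1 - τ * (1 - q) * δ).toNNReal < 1 :=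
    Real.toNNReal_lt_one.2 (by nlinarith [mul_pos (mul_pos hτ (sub_pos.2 hq)) hδ])
  have hcontr : ContractingWith _ fun x => x - τ • penalisedResidual 𝔄 𝔅 (Set.Icc a b) u₀ ρ x :=
    ⟨hκ, lipschitzWith_sub_smul_penalisedResidual isCompact_Icc hAcont hbcont hu₀ hρ.le hq.le
      hτ.le hτC.le hbounds hδ.le⟩
  simpa only [funext_iff, penalisedResidual, Pi.zero_apply] using
    existsUnique_eq_zero_of_contractingWith hτ.ne' hcontr

/-- For every `u₀ ∈ U` and every `ρ > 0`, the penalised HJB equation with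
penalty term `Π(y) = max{y,0}` has a unique solution; the componentwise
maximum over the compact set `U` is expressed via `sSup` of the image. -/
theorem penalised_HJB_max_penalty_exists_unique
    (N : ℕ) (hN : 0 < N) (a b : ℝ) (hab : a ≤ b)
    (𝔄 : ℝ → Matrix (Fin N) (Fin N) ℝ) (𝔅 : ℝ → (Fin N → ℝ))
    (hAcont : ContinuousOn 𝔄 (Set.Icc a b)) (hbcont : ContinuousOn 𝔅 (Set.Icc a b))
    (hKo : ∀ u ∈ Set.Icc a b, KoMat (𝔄 u))
    (u₀ : ℝ) (hu₀ : u₀ ∈ Set.Icc a b) (ρ : ℝ) (hρ : 0 < ρ) :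
    ∃! x : Fin N → ℝ,
      ∀ i : Fin N,
        (𝔄 u₀ *ᵥ x - 𝔅 u₀) i -
          ρ * sSup ((fun u => max ((𝔅 u - 𝔄 u *ᵥ x) i) 0) '' Set.Icc a b) = 0 :=
  penalised_HJB_max_penalty_exists_unique_general N a b 𝔄 𝔅 hAcont hbcont hKo u₀ hu₀ ρ hρ
end
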